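/- For circular Nim CN(3,2) (three stacks arranged in a circle, each move removes at least one token total from two consecutive stacks), the set of P-positions is exactly {(a,a,a) : a ≥ 0}. -/

import Mathlib

/-!
A set of positions from which no move stays inside the set, and into which every position
outside it can move, is exactly the set of P-positions (induction on the total number of
tokens). For CN(3,2) the constant positions form such a set: a move leaves the stack opposite
the chosen pair untouched, so it cannot reach another constant position; and a non-constant
position reaches a constant one by lowering the two stacks other than a minimal one to that
minimum.
-/

/-- A legal move in SetNim: at least one stack strictly decreases, all changed
stacks lie in some allowed move set, stacks weakly decrease. -/
def Move {V : Type} (A : Set (Set V)) (p q : V → ℕ) : Prop :=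
  q ≠ p ∧ (∀ i, q i ≤ p i) ∧ ∃ a ∈ A, ∀ i, q i ≠ p i → i ∈ a

/-- P-positions: positions all of whose options are N-positions. -/
def PPos {V : Type} [Fintype V] (A : Set (Set V)) (p : V → ℕ) : Prop :=
  ∀ q, Move A p q → ¬ PPos A q
termination_by Finset.univ.sum p
decreasing_by
  rename_i hq
  obtain ⟨hne, hle, -⟩ := hq
  refine Finset.sum_lt_sum (fun i _ => hle i) ?_
  obtain ⟨i, hi⟩ := Function.ne_iff.mp hne
  exact ⟨i, Finset.mem_univ i, lt_of_le_of_ne (hle i) hi⟩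


/-- Move sets of circular Nim CN(3,2): two consecutive stacks. -/
def CN32 : Set (Set (Fin 3)) := {s | ∃ i : Fin 3, s = {i, i + 1}}

section SetNim

variable {V : Type} {A : Set (Set V)}

theorem Move.sum_lt [Fintype V] {p q : V → ℕ} (h : Move A p q) : ∑ i, q i < ∑ i, p i := by
  obtain ⟨hne, hle, -⟩ := h
  obtain ⟨i, hi⟩ := Function.ne_iff.mp hne
  exact Finset.sum_lt_sum (fun j _ => hle j) ⟨i, Finset.mem_univ i, (hle i).lt_of_ne hi⟩

theorem pPos_iff_mem_of_stable_of_absorbing [Fintype V] {S : Set (V → ℕ)}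
    (stable : ∀ p ∈ S, ∀ q, Move A p q → q ∉ S)
    (absorbing : ∀ p ∉ S, ∃ q ∈ S, Move A p q) (p : V → ℕ) :
    PPos A p ↔ p ∈ S := by
  induction hn : ∑ i, p i using Nat.strong_induction_on generalizing p with
  | _ n ih =>
  subst hn
  have ih' : ∀ q, Move A p q → (PPos A q ↔ q ∈ S) := fun q hm => ih _ hm.sum_lt q rfl
  rw [PPos]
  constructor
  · intro hp
    by_contra hpS
    obtain ⟨q, hqS, hm⟩ := absorbing p hpS
    exact hp q hm ((ih' q hm).mpr hqS)
  · intro hpS q hm hq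
    exact stable p hpS q hm ((ih' q hm).mp hq)

end SetNim

theorem Fin.three_add_two_notMem_pair (i : Fin 3) : i + 1 + 1 ∉ ({i, i + 1} : Set (Fin 3)) := by
  fin_cases i <;> decide

theorem Fin.three_mem_pair_of_ne {i j : Fin 3} (h : i ≠ j) :
    i ∈ ({j + 1, j + 1 + 1} : Set (Fin 3)) := by
  fin_cases i <;> fin_cases j <;> simp_all

theorem cn32_not_move_const_const {p q : Fin 3 → ℕ} (hp : ∃ a, ∀ i, p i = a)
    (hq : ∃ b, ∀ i, q i = b) : ¬ Move CN32 p q := by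
  rintro ⟨hne, -, s, ⟨i, rfl⟩, hchanged⟩
  obtain ⟨a, ha⟩ := hp
  obtain ⟨b, hb⟩ := hq
  have hfixed : q (i + 1 + 1) = p (i + 1 + 1) :=
    not_not.mp fun h => Fin.three_add_two_notMem_pair i (hchanged _ h)
  have hba : b = a := by rw [← hb (i + 1 + 1), ← ha (i + 1 + 1), hfixed]
  exact hne (funext fun j => by rw [hb, ha, hba])

theorem cn32_exists_move_to_const {p : Fin 3 → ℕ} (hp : ¬ ∃ a, ∀ i, p i = a) :
    ∃ q : Fin 3 → ℕ, (∃ b, ∀ i, q i = b) ∧ Move CN32 p q := by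
  obtain ⟨j, hj⟩ := Finite.exists_min p
  refine ⟨fun _ => p j, ⟨p j, fun _ => rfl⟩, ?_, hj, _, ⟨j + 1, rfl⟩, fun i hi => ?_⟩
  · exact fun h => hp ⟨p j, fun i => (congrFun h i).symm⟩
  · exact Fin.three_mem_pair_of_ne fun hij => hi (hij ▸ rfl)

theorem cn32_ppos (p : Fin 3 → ℕ) :
    PPos CN32 p ↔ ∃ a : ℕ, ∀ i, p i = a :=
  pPos_iff_mem_of_stable_of_absorbing (S := {p | ∃ a, ∀ i, p i = a})
    (fun _ hp _ hm hq => cn32_not_move_const_const hp hq hm)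
    (fun _ hp => cn32_exists_move_to_const hp) p
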